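/- For every y ∈ ℝ^M and every λ > 0, if x₁ and x₂ are both minimizers of problem (P), then Φ x₁ = Φ x₂. -/

import Mathlib

open RealInnerProductSpace

noncomputable section

abbrev Euc (n : ℕ) := EuclideanSpace ℝ (Fin n)

def proj {n : ℕ} (V : Submodule ℝ (Euc n)) : Euc n →L[ℝ] Euc n :=
  V.subtypeL.comp (V.orthogonalProjection)

def dualNorm {n : ℕ} (A : Euc n → ℝ) (α : Euc n) : ℝ :=
  sSup {r : ℝ | ∃ v : Euc n, A v ≤ 1 ∧ r = ⟪α, v⟫}

def subdiff {n : ℕ} (f : Euc n → ℝ) (x : Euc n) : Set (Euc n) :=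
  {g : Euc n | ∀ y : Euc n, f x + ⟪g, y - x⟫ ≤ f y}

def IsNorm {n : ℕ} (A : Euc n → ℝ) : Prop :=
  (∀ x, A x = 0 ↔ x = 0) ∧ (∀ (c : ℝ) (x : Euc n), A (c • x) = |c| * A x) ∧
    (∀ x y, A (x + y) ≤ A x + A y)

def Decomposable {n : ℕ} (A : Euc n → ℝ) (u : Euc n) (T : Submodule ℝ (Euc n)) (e : Euc n) :
    Prop :=
  e ∈ T ∧
  subdiff A u = {α : Euc n | proj T α = e ∧ dualNorm A (proj Tᗮ α) ≤ 1} ∧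
  ∀ z : Euc n, z ∈ Tᗮ →
    A z = sSup {r : ℝ | ∃ v ∈ (Tᗮ : Submodule ℝ (Euc n)), dualNorm A v ≤ 1 ∧ r = ⟪v, z⟫}

def obj {N M P : ℕ} (Φ : Euc N →L[ℝ] Euc M) (L : Euc P →L[ℝ] Euc N) (A : Euc P → ℝ)
    (y : Euc M) (lam : ℝ) (x : Euc N) : ℝ :=
  (1/2) * ‖y - Φ x‖^2 + lam * A (ContinuousLinearMap.adjoint L x)

def SC {N M P : ℕ} (Φ : Euc N →L[ℝ] Euc M) (L : Euc P →L[ℝ] Euc N) (A : Euc P → ℝ)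
    (x : Euc N) (η : Euc M) (α : Euc P) : Prop :=
  α ∈ subdiff A (ContinuousLinearMap.adjoint L x) ∧
  ContinuousLinearMap.adjoint Φ η = L α ∧
  L α ∈ subdiff (fun z => A (ContinuousLinearMap.adjoint L z)) x

def breg {n : ℕ} (A : Euc n → ℝ) (α u u₀ : Euc n) : ℝ :=
  A u - A u₀ - ⟪α, u - u₀⟫


/-! The fidelity `u ↦ ½‖y - u‖²` is strictly convex (even `1`-strongly convex) and the
regulariser `λ A(L* ·)` is convex. If two minimisers had `Φ x₁ ≠ Φ x₂`, their midpoint would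
have objective strictly below the common minimal value. -/

open Set

lemma IsNorm.convexOn {n : ℕ} {A : Euc n → ℝ} (hA : IsNorm A) : ConvexOn ℝ univ A := by
  obtain ⟨-, hsmul, hadd⟩ := hA
  refine ⟨convex_univ, fun u _ v _ a b ha hb _ => ?_⟩
  calc A (a • u + b • v) ≤ A (a • u) + A (b • v) := hadd _ _
    _ = a • A u + b • A v := by rw [hsmul, hsmul, abs_of_nonneg ha, abs_of_nonneg hb]; rfl

lemma strongConvexOn_half_norm_sub_sq {F : Type*} [NormedAddCommGroup F] [InnerProductSpace ℝ F]
    (y : F) : StrongConvexOn univ 1 fun u : F => 1 / 2 * ‖y - u‖ ^ 2 := by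
  rw [strongConvexOn_iff_convex]
  have : ConvexOn ℝ univ fun u : F => -⟪y, u⟫ + 1 / 2 * ‖y‖ ^ 2 :=
    ((-innerₗ F y).convexOn convex_univ).add_const _
  convert this using 2 with u
  rw [norm_sub_sq_real]
  ring

theorem StrictConvexOn.map_eq_of_isMinOn_comp_add {E F : Type*} [AddCommGroup E] [Module ℝ E]
    [AddCommGroup F] [Module ℝ F] {g : F → ℝ} {h : E → ℝ} (hg : StrictConvexOn ℝ univ g)
    (hh : ConvexOn ℝ univ h) (Φ : E →ₗ[ℝ] F) {x₁ x₂ : E}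
    (h₁ : IsMinOn (fun x => g (Φ x) + h x) univ x₁)
    (h₂ : IsMinOn (fun x => g (Φ x) + h x) univ x₂) : Φ x₁ = Φ x₂ := by
  by_contra hne
  have hhalf : (0 : ℝ) < 2⁻¹ := by norm_num
  have hsum : (2 : ℝ)⁻¹ + 2⁻¹ = 1 := by norm_num
  have hg_mid := hg.2 trivial trivial hne hhalf hhalf hsum
  have hh_mid := hh.2 (mem_univ x₁) (mem_univ x₂) hhalf.le hhalf.le hsum
  have h₁_mid := isMinOn_univ_iff.1 h₁ ((2 : ℝ)⁻¹ • x₁ + (2 : ℝ)⁻¹ • x₂)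
  have h₁₂ := isMinOn_univ_iff.1 h₁ x₂
  have h₂₁ := isMinOn_univ_iff.1 h₂ x₁
  simp only [map_add, map_smul, smul_eq_mul] at hg_mid hh_mid h₁_mid
  linarith

theorem stmt10 {N M P : ℕ} (Φ : Euc N →L[ℝ] Euc M) (L : Euc P →L[ℝ] Euc N)
    (A : Euc P → ℝ) (hA : IsNorm A) (y : Euc M) (lam : ℝ) (hlam : 0 < lam)
    (x₁ x₂ : Euc N)
    (h₁ : ∀ z, obj Φ L A y lam x₁ ≤ obj Φ L A y lam z)
    (h₂ : ∀ z, obj Φ L A y lam x₂ ≤ obj Φ L A y lam z) :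
    Φ x₁ = Φ x₂ := by
  have hreg : ConvexOn ℝ univ fun x => lam * A (ContinuousLinearMap.adjoint L x) :=
    (hA.convexOn.comp_linearMap (ContinuousLinearMap.adjoint L).toLinearMap).smul hlam.le
  exact ((strongConvexOn_half_norm_sub_sq y).strictConvexOn one_pos).map_eq_of_isMinOn_comp_add
    hreg Φ.toLinearMap (isMinOn_univ_iff.2 h₁) (isMinOn_univ_iff.2 h₂)
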